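/- Let N ≥ 1 and let (A_j, Ω_j), j ∈ ℕ, be relative fractal drums in ℝ^N such that the open sets Ω_j are pairwise disjoint and each A_j is nonempty. Let A := ⋃_j A_j and Ω := ⋃_j Ω_j, assume |Ω| < ∞ and Ω ⊆ A_δ for some δ > 0 (so that (A,Ω) is a relative fractal drum), and assume that d(x,A) = d(x,A_j) for every j ∈ ℕ and every x ∈ Ω_j. Then for every s ∈ ℂ with Re s > \overline{dim}_B(A,Ω): each function x ↦ d(x,A_j)^{s−N} is Lebesgue integrable on Ω_j, and the family (∫_{Ω_j} d(x,A_j)^{s−N} dx)_{j∈ℕ} has sum ∫_Ω d(x,A)^{s−N} dx (the series converges absolutely to ζ_{A,Ω}(s)). -/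

import Mathlib

/-!
For `σ = Re s`, the norm of `d(x, A) ^ (s - N)` is at most `d(x, A) ^ (σ - N)`. If `σ ≥ N`
this is bounded on `Ω ⊆ A_δ`. If `σ < N`, the layer-cake formula reduces its integral over `Ω`
to `∫₀^∞ |{x ∈ Ω : d(x, A) < t ^ (1 / (σ - N))}| dt`; choosing `r < σ` with
`M^{*r}(A, Ω) = 0`, the integrand is `O(t ^ ((N - r) / (σ - N)))` for large `t`, an integrable
power since `r < σ`. So the integrand of `ζ_{A,Ω}(s)` is integrable on `Ω`, and countable
additivity of the integral over the disjoint `Ω j`, on each of which `d(·, A) = d(·, A j)`,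
gives the series.
-/

open MeasureTheory Metric Filter Set
open scoped ENNReal Topology

/-- The upper `r`-dimensional relative Minkowski content of the pair `(A, Ω)` in `ℝ^N`. -/
noncomputable def upMink (N : ℕ) (A Ω : Set (EuclideanSpace ℝ (Fin N))) (r : ℝ) : ℝ≥0∞ :=
  Filter.limsup
    (fun t : ℝ => volume (Metric.thickening t A ∩ Ω) / ENNReal.ofReal (t ^ ((N : ℝ) - r)))
    (𝓝[>] (0 : ℝ))

/-- The upper relative box (Minkowski) dimension of `(A, Ω)`, as an extended real number. -/
noncomputable def ubDim (N : ℕ) (A Ω : Set (EuclideanSpace ℝ (Fin N))) : EReal :=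
  sInf {x : EReal | ∃ r : ℝ, x = (r : EReal) ∧ upMink N A Ω r = 0}

theorem Complex.norm_ofReal_cpow_le {x : ℝ} (hx : 0 ≤ x) (w : ℂ) :
    ‖(x : ℂ) ^ w‖ ≤ x ^ w.re := by
  simpa [Complex.arg_ofReal_of_nonneg hx, abs_of_nonneg hx] using Complex.norm_cpow_le x w

theorem setOf_lt_rpow_subset_setOf_lt_rpow_inv {α : Type*} {f : α → ℝ} (hf0 : ∀ x, 0 ≤ f x)
    {e t : ℝ} (he : e < 0) (ht : 0 < t) : {x | t < f x ^ e} ⊆ {x | f x < t ^ e⁻¹} := by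
  intro x (hx : t < f x ^ e)
  have hfx : 0 < f x := by
    refine (hf0 x).lt_of_ne fun h0 => ?_
    rw [← h0, Real.zero_rpow he.ne] at hx
    exact ht.not_gt hx
  exact (Real.lt_rpow_inv_iff_of_neg hfx ht he).mpr hx

theorem integrableOn_rpow_of_measure_sublevel_le {α : Type*} [MeasurableSpace α]
    {μ : Measure α} {f : α → ℝ} {Ω : Set α} (hf : Measurable f) (hf0 : ∀ x, 0 ≤ f x)
    (hΩ : MeasurableSet Ω) (hμΩ : μ Ω < ∞) {a e : ℝ} (he : e < 0) (hea : -e < a)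
    (hsub : ∀ᶠ t in 𝓝[>] 0, μ ({x | f x < t} ∩ Ω) ≤ ENNReal.ofReal (t ^ a)) :
    IntegrableOn (fun x => f x ^ e) Ω μ := by
  obtain ⟨t₀, ht₀ : 0 < t₀, hsub⟩ := mem_nhdsGT_iff_exists_Ioc_subset.mp hsub
  have hmeas : Measurable fun x => f x ^ e := hf.pow_const e
  have hnonneg : ∀ x, 0 ≤ f x ^ e := fun x => Real.rpow_nonneg (hf0 x) e
  refine ⟨hmeas.aestronglyMeasurable, ?_⟩
  rw [hasFiniteIntegral_iff_ofReal (ae_of_all _ hnonneg),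
    lintegral_eq_lintegral_meas_lt _ (ae_of_all _ hnonneg) hmeas.aemeasurable]
  -- Past `T`, the level `t ^ e⁻¹` of the sublevel set lies in `(0, t₀]`, where `hsub` applies.
  set T := t₀ ^ e
  have hT : 0 < T := Real.rpow_pos_of_pos ht₀ e
  have hhead : ∫⁻ t in Ioc 0 T, μ.restrict Ω {x | t < f x ^ e} < ∞ := by
    calc ∫⁻ t in Ioc 0 T, μ.restrict Ω {x | t < f x ^ e}
        ≤ ∫⁻ _ in Ioc 0 T, μ Ω :=
          lintegral_mono fun t =>
            (Measure.restrict_apply' hΩ).trans_le (measure_mono inter_subset_right)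
      _ = μ Ω * volume (Ioc 0 T) := setLIntegral_const _ _
      _ < ∞ := ENNReal.mul_lt_top hμΩ (by simp [Real.volume_Ioc])
  have htail : ∫⁻ t in Ioi T, μ.restrict Ω {x | t < f x ^ e} < ∞ := by
    have hexp : e⁻¹ * a < -1 := by
      rw [← div_eq_inv_mul, div_lt_iff_of_neg he]
      linarith
    have hbound : ∀ t ∈ Ioi T,
        μ.restrict Ω {x | t < f x ^ e} ≤ ENNReal.ofReal (t ^ (e⁻¹ * a)) := by
      intro t (ht : T < t)
      have htpos : 0 < t := hT.trans ht
      have hmem : t ^ e⁻¹ ∈ Ioc 0 t₀ := by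
        refine ⟨Real.rpow_pos_of_pos htpos _, ?_⟩
        have := Real.rpow_le_rpow_of_nonpos hT ht.le (inv_lt_zero.mpr he).le
        rwa [Real.rpow_rpow_inv ht₀.le he.ne] at this
      calc μ.restrict Ω {x | t < f x ^ e}
          ≤ μ ({x | f x < t ^ e⁻¹} ∩ Ω) :=
            (Measure.restrict_apply' hΩ).trans_le <| measure_mono <|
              inter_subset_inter_left _ (setOf_lt_rpow_subset_setOf_lt_rpow_inv hf0 he htpos)
        _ ≤ ENNReal.ofReal ((t ^ e⁻¹) ^ a) := hsub hmem
        _ = ENNReal.ofReal (t ^ (e⁻¹ * a)) := by rw [← Real.rpow_mul htpos.le]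
    calc ∫⁻ t in Ioi T, μ.restrict Ω {x | t < f x ^ e}
        ≤ ∫⁻ t in Ioi T, ENNReal.ofReal (t ^ (e⁻¹ * a)) :=
          setLIntegral_mono' measurableSet_Ioi hbound
      _ < ∞ := (integrableOn_Ioi_rpow_of_lt hexp hT).lintegral_lt_top
  rw [← Ioc_union_Ioi_eq_Ioi hT.le, lintegral_union measurableSet_Ioi (Ioc_disjoint_Ioi le_rfl)]
  exact ENNReal.add_lt_top.mpr ⟨hhead, htail⟩

section RelativeFractalDrum

variable {N : ℕ} {A Ω : Set (EuclideanSpace ℝ (Fin N))}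

theorem exists_upMink_eq_zero_of_ubDim_lt {σ : ℝ} (h : ubDim N A Ω < σ) :
    ∃ r < σ, upMink N A Ω r = 0 := by
  obtain ⟨_, ⟨r, rfl, hr⟩, hrσ⟩ := sInf_lt_iff.mp h
  exact ⟨r, EReal.coe_lt_coe_iff.mp hrσ, hr⟩

theorem eventually_volume_thickening_inter_lt_of_upMink_eq_zero {r : ℝ}
    (h : upMink N A Ω r = 0) :
    ∀ᶠ t in 𝓝[>] 0, volume (thickening t A ∩ Ω) < ENNReal.ofReal (t ^ ((N : ℝ) - r)) := by
  have hlt : upMink N A Ω r < 1 := h ▸ zero_lt_one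
  filter_upwards [eventually_lt_of_limsup_lt hlt, self_mem_nhdsWithin] with t ht (htpos : 0 < t)
  have hden : ENNReal.ofReal (t ^ ((N : ℝ) - r)) ≠ 0 := by
    simpa using Real.rpow_pos_of_pos htpos _
  simpa using (ENNReal.div_lt_iff (Or.inl hden) (Or.inl ENNReal.ofReal_ne_top)).mp ht

theorem integrableOn_infDist_rpow (hA : A.Nonempty) (hΩ : MeasurableSet Ω)
    (hΩv : volume Ω < ∞) {δ : ℝ} (hΩδ : Ω ⊆ thickening δ A) {σ : ℝ}
    (hσ : ubDim N A Ω < σ) :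
    IntegrableOn (fun x => infDist x A ^ (σ - N)) Ω volume := by
  have hmeas : Measurable fun x => infDist x A ^ (σ - N) :=
    (continuous_infDist_pt A).measurable.pow_const _
  rcases le_or_gt (N : ℝ) σ with hNσ | hσN
  · refine (integrableOn_const (C := δ ^ (σ - N)) hΩv.ne).mono' hmeas.aestronglyMeasurable
      (ae_restrict_of_forall_mem hΩ fun x hx => ?_)
    rw [Real.norm_of_nonneg (Real.rpow_nonneg infDist_nonneg _)]
    exact Real.rpow_le_rpow infDist_nonneg
      ((mem_thickening_iff_infDist_lt hA).mp (hΩδ hx)).le (sub_nonneg.mpr hNσ)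
  · obtain ⟨r, hrσ, hr⟩ := exists_upMink_eq_zero_of_ubDim_lt hσ
    refine integrableOn_rpow_of_measure_sublevel_le (continuous_infDist_pt A).measurable
      (fun _ => infDist_nonneg) hΩ hΩv (a := N - r) (sub_neg.mpr hσN) (by linarith) ?_
    filter_upwards [eventually_volume_thickening_inter_lt_of_upMink_eq_zero hr] with t ht
    refine le_trans (measure_mono ?_) ht.le
    exact inter_subset_inter_left _ fun x hx => (mem_thickening_iff_infDist_lt hA).mpr hx

theorem integrableOn_infDist_cpow (hA : A.Nonempty) (hΩ : MeasurableSet Ω)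
    (hΩv : volume Ω < ∞) {δ : ℝ} (hΩδ : Ω ⊆ thickening δ A) {s : ℂ}
    (hs : ubDim N A Ω < s.re) :
    IntegrableOn (fun x => (infDist x A : ℂ) ^ (s - N)) Ω volume := by
  refine (integrableOn_infDist_rpow hA hΩ hΩv hΩδ hs).mono'
    ((Complex.measurable_ofReal.comp (continuous_infDist_pt A).measurable).pow_const _
      ).aestronglyMeasurable (ae_of_all _ fun x => ?_)
  simpa using Complex.norm_ofReal_cpow_le infDist_nonneg (s - N)

end RelativeFractalDrum

theorem stmt9_general (N : ℕ) (A Ω : ℕ → Set (EuclideanSpace ℝ (Fin N)))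
    (hA : ∀ j, (A j).Nonempty) (hΩo : ∀ j, IsOpen (Ω j))
    (hdisj : ∀ i j, i ≠ j → Disjoint (Ω i) (Ω j))
    (hUv : volume (⋃ j, Ω j) < ⊤)
    (hUδ : ∃ δ > 0, (⋃ j, Ω j) ⊆ Metric.thickening δ (⋃ j, A j))
    (hd : ∀ j, ∀ x ∈ Ω j, Metric.infDist x (⋃ i, A i) = Metric.infDist x (A j))
    (s : ℂ) (hs : ubDim N (⋃ j, A j) (⋃ j, Ω j) < (s.re : EReal)) :
    (∀ j, MeasureTheory.IntegrableOn
        (fun x => (Metric.infDist x (A j) : ℂ) ^ (s - (N : ℂ))) (Ω j) volume) ∧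
    HasSum (fun j => ∫ x in Ω j, (Metric.infDist x (A j) : ℂ) ^ (s - (N : ℂ)))
      (∫ x in ⋃ j, Ω j, (Metric.infDist x (⋃ i, A i) : ℂ) ^ (s - (N : ℂ))) := by
  obtain ⟨δ, -, hδ⟩ := hUδ
  have hΩm : ∀ j, MeasurableSet (Ω j) := fun j => (hΩo j).measurableSet
  have hint := integrableOn_infDist_cpow ((hA 0).mono (subset_iUnion A 0))
    (MeasurableSet.iUnion hΩm) hUv hδ hs
  have hpiece : ∀ j, EqOn (fun x => (infDist x (⋃ i, A i) : ℂ) ^ (s - N))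
      (fun x => (infDist x (A j) : ℂ) ^ (s - N)) (Ω j) := fun j x hx => by
    simp only [hd j x hx]
  refine ⟨fun j => (hint.mono_set (subset_iUnion Ω j)).congr_fun (hpiece j) (hΩm j), ?_⟩
  have hsum := hasSum_integral_iUnion hΩm (fun i j hij => hdisj i j hij) hint
  rwa [funext fun j => setIntegral_congr_fun (hΩm j) (hpiece j)] at hsum

/-- Countable additivity of the relative distance zeta function: if `(A, Ω)` is the disjoint
union of the RFDs `(A j, Ω j)` and `d(x, A) = d(x, A j)` on each `Ω j`, then for every `s`
with `Re s > dim_B(A, Ω)` the series `∑ j ζ_{A j, Ω j}(s)` converges (absolutely) to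
`ζ_{A,Ω}(s)`. -/
theorem stmt9 (N : ℕ) (hN : 1 ≤ N) (A Ω : ℕ → Set (EuclideanSpace ℝ (Fin N)))
    (hA : ∀ j, (A j).Nonempty) (hΩo : ∀ j, IsOpen (Ω j)) (hΩv : ∀ j, volume (Ω j) < ⊤)
    (hΩδ : ∀ j, ∃ δ > 0, Ω j ⊆ Metric.thickening δ (A j))
    (hdisj : ∀ i j, i ≠ j → Disjoint (Ω i) (Ω j))
    (hUv : volume (⋃ j, Ω j) < ⊤)
    (hUδ : ∃ δ > 0, (⋃ j, Ω j) ⊆ Metric.thickening δ (⋃ j, A j))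
    (hd : ∀ j, ∀ x ∈ Ω j, Metric.infDist x (⋃ i, A i) = Metric.infDist x (A j))
    (s : ℂ) (hs : ubDim N (⋃ j, A j) (⋃ j, Ω j) < (s.re : EReal)) :
    (∀ j, MeasureTheory.IntegrableOn
        (fun x => (Metric.infDist x (A j) : ℂ) ^ (s - (N : ℂ))) (Ω j) volume) ∧
    HasSum (fun j => ∫ x in Ω j, (Metric.infDist x (A j) : ℂ) ^ (s - (N : ℂ)))
      (∫ x in ⋃ j, Ω j, (Metric.infDist x (⋃ i, A i) : ℂ) ^ (s - (N : ℂ))) :=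
  stmt9_general N A Ω hA hΩo hdisj hUv hUδ hd s hs
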